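/- Assume the ABC conjecture. Let a > 1 be an integer, c > 1 real, K ≥ 1. Then the set {n ≥ 1 : s_{Kn}(a^n - 1) > c^n} is finite. -/

import Mathlib

/-- The radical of an integer: product of its distinct prime factors. -/
def intRadical (m : ℤ) : ℕ := ∏ p ∈ m.natAbs.primeFactors, p

/-- The `y`-smooth part of `m`. -/
noncomputable def smoothPart (y : ℝ) (m : ℕ) : ℕ :=
  ∏ p ∈ m.primeFactors, p ^ (if (p : ℝ) ≤ y then m.factorization p else 0)

/-- The ABC conjecture. -/
def ABCConjecture : Prop :=
  ∀ ε : ℝ, 0 < ε → ∃ Kε : ℝ, 0 < Kε ∧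
    ∀ A B C : ℤ, A ≠ 0 → B ≠ 0 → C ≠ 0 → IsCoprime A B → A + B = C →
      (max |A| (max |B| |C|) : ℝ) ≤ Kε * (intRadical (A * B * C) : ℝ) ^ (1 + ε)

/-!
Write `m = a ^ n - 1`, `y = K n`, and `rad_y m` for the product of the primes `p ≤ y` dividing `m`.
Comparing exponents prime by prime, `s_y(m) * rad m` divides `m * rad_y m`. The ABC conjecture for
`m + 1 = a ^ n` gives `log (rad m) ≥ (1 - ε) n log a - O(1)`. Every prime `p ∣ m` has an order
`e ∣ n` of `a` modulo `p`; the primes `p ≤ y` of order `e` divide `a ^ e - 1` and are `≡ 1 mod e`,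
so their logarithms sum to at most `min (e log a) ((y / e) log y) ≤ √(y log y log a)`. Hence
`log (rad_y m) ≤ τ(n) √(y log y log a) = O(n ^ (11/12))`, and altogether
`log s_y(m) ≤ ε n log a + o(n)`, which is below `n log c` once `ε log a < log c` and `n` is large.
-/

open Finset Real Filter Asymptotics

noncomputable def smoothRadical (y : ℝ) (m : ℕ) : ℕ :=
  ∏ p ∈ m.primeFactors.filter (fun p : ℕ => (p : ℝ) ≤ y), p

lemma succ_pow_three_le_eight_mul_two_pow (e : ℕ) : (e + 1) ^ 3 ≤ 8 * 2 ^ e := by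
  induction e with
  | zero => norm_num
  | succ k ih =>
    rcases le_or_gt k 2 with hk | hk
    · interval_cases k <;> norm_num
    · calc (k + 1 + 1) ^ 3 ≤ 2 * (k + 1) ^ 3 := by nlinarith [sq_nonneg k]
        _ ≤ 8 * 2 ^ (k + 1) := by rw [pow_succ 2 k]; omega

lemma succ_pow_three_le_mul_pow {p : ℕ} (hp : 2 ≤ p) (e : ℕ) :
    (e + 1) ^ 3 ≤ (if p ≤ 7 then 8 else 1) * p ^ e := by
  split_ifs with h7
  · calc (e + 1) ^ 3 ≤ 8 * 2 ^ e := succ_pow_three_le_eight_mul_two_pow e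
      _ ≤ 8 * p ^ e := by gcongr
  · calc (e + 1) ^ 3 ≤ (2 ^ e) ^ 3 := by gcongr; exact Nat.lt_two_pow_self
      _ = 8 ^ e := by rw [← pow_mul, mul_comm, pow_mul]; norm_num
      _ ≤ 1 * p ^ e := by rw [one_mul]; gcongr; omega

lemma Nat.card_divisors_pow_three_le (n : ℕ) : #n.divisors ^ 3 ≤ 8 ^ 8 * n := by
  rcases eq_or_ne n 0 with rfl | hn
  · simp
  have hsmall : ∏ p ∈ n.primeFactors, (if p ≤ 7 then 8 else 1) ≤ 8 ^ 8 := by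
    rw [← prod_filter, prod_const]
    gcongr
    · norm_num
    · exact (card_le_card fun p hp => mem_range.2 (by grind)).trans (card_range 8).le
  calc #n.divisors ^ 3 = ∏ p ∈ n.primeFactors, (n.factorization p + 1) ^ 3 := by
        rw [Nat.card_divisors hn, prod_pow]
    _ ≤ ∏ p ∈ n.primeFactors, (if p ≤ 7 then 8 else 1) * p ^ n.factorization p :=
        prod_le_prod' fun p hp =>
          succ_pow_three_le_mul_pow (Nat.prime_of_mem_primeFactors hp).two_le _
    _ ≤ 8 ^ 8 * n := by
        rw [prod_mul_distrib, ← Nat.prod_primeFactors_pow_factorization hn]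
        gcongr

lemma Nat.card_divisors_le_rpow (n : ℕ) : (#n.divisors : ℝ) ≤ 256 * (n : ℝ) ^ (1 / 3 : ℝ) := by
  have hcube : ((#n.divisors : ℝ)) ^ 3 ≤ (256 * (n : ℝ) ^ (1 / 3 : ℝ)) ^ 3 := by
    rw [mul_pow, ← Real.rpow_natCast ((n : ℝ) ^ _), ← Real.rpow_mul n.cast_nonneg]
    norm_num
    exact_mod_cast n.card_divisors_pow_three_le
  exact le_of_pow_le_pow_left₀ (by norm_num) (by positivity) hcube

lemma smoothPart_mul_prod_primeFactors_dvd (y : ℝ) (m : ℕ) :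
    smoothPart y m * ∏ p ∈ m.primeFactors, p ∣ m * smoothRadical y m := by
  rcases eq_or_ne m 0 with rfl | hm
  · simp
  have hrad : smoothRadical y m = ∏ p ∈ m.primeFactors, p ^ (if (p : ℝ) ≤ y then 1 else 0) := by
    rw [smoothRadical, prod_filter]
    exact prod_congr rfl fun p _ => by split_ifs <;> simp
  have hm' : m * smoothRadical y m =
      ∏ p ∈ m.primeFactors, p ^ (m.factorization p + if (p : ℝ) ≤ y then 1 else 0) := by
    simp only [hrad, pow_add, prod_mul_distrib]
    rw [← Nat.prod_primeFactors_pow_factorization hm]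
  rw [hm', smoothPart, ← prod_mul_distrib]
  refine prod_dvd_prod_of_dvd _ _ fun p hp => ?_
  rw [← pow_succ]
  have := (Nat.prime_of_mem_primeFactors hp).factorization_pos_of_dvd hm
    (Nat.dvd_of_mem_primeFactors hp)
  exact pow_dvd_pow p (by split_ifs <;> omega)

lemma ZMod.natCast_pow_eq_one_iff_dvd {p a k : ℕ} (ha : a ≠ 0) :
    (a : ZMod p) ^ k = 1 ↔ p ∣ a ^ k - 1 := by
  rw [← ZMod.natCast_eq_zero_iff, Nat.cast_sub (Nat.one_le_pow _ _ (Nat.pos_of_ne_zero ha)),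
    sub_eq_zero]
  push_cast
  rfl

lemma card_le_div_of_dvd_sub_one {Q : Finset ℕ} {N e : ℕ}
    (hQ : ∀ p ∈ Q, 1 < p ∧ p ≤ N ∧ e ∣ p - 1) : #Q ≤ N / e := by
  rw [← Nat.Ioc_filter_dvd_card_eq_div]
  refine card_le_card_of_injOn (· - 1) (fun p hp => ?_) (fun p hp q hq hpq => ?_)
  · obtain ⟨h1, hN, he⟩ := hQ p hp
    simp only [mem_coe, mem_filter, mem_Ioc]
    exact ⟨⟨by omega, by omega⟩, he⟩
  · have := (hQ p hp).1
    have := (hQ q hq).1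
    simp only at hpq
    omega

lemma sum_log_le_mul_log_of_pow_eq_one {a e : ℕ} (ha : 1 < a) (he : 0 < e) {Q : Finset ℕ}
    (hQ : ∀ p ∈ Q, p.Prime ∧ (a : ZMod p) ^ e = 1) :
    ∑ p ∈ Q, log p ≤ e * log a := by
  have hdvd : ∏ p ∈ Q, p ∣ a ^ e - 1 :=
    prod_primes_dvd _ (fun p hp => (hQ p hp).1.prime)
      fun p hp => (ZMod.natCast_pow_eq_one_iff_dvd (by omega)).1 (hQ p hp).2
  have hle : ∏ p ∈ Q, p ≤ a ^ e :=
    (Nat.le_of_dvd (by have := Nat.one_lt_pow he.ne' ha; omega) hdvd).trans (Nat.sub_le _ _)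
  rw [← log_prod fun p hp => by exact_mod_cast (hQ p hp).1.ne_zero, ← log_pow]
  exact log_le_log (prod_pos fun p hp => by exact_mod_cast (hQ p hp).1.pos)
    (by rw [← Nat.cast_prod, ← Nat.cast_pow]; exact_mod_cast hle)

lemma sum_log_le_div_mul_log {e : ℕ} {y : ℝ} (hy : 1 ≤ y) (he : 0 < e) {Q : Finset ℕ}
    (hQ : ∀ p ∈ Q, p.Prime ∧ (p : ℝ) ≤ y ∧ e ∣ p - 1) :
    ∑ p ∈ Q, log p ≤ y / e * log y := by
  have hcard : (#Q : ℝ) ≤ y / e := by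
    have := card_le_div_of_dvd_sub_one fun p hp =>
      ⟨(hQ p hp).1.one_lt, Nat.le_floor (hQ p hp).2.1, (hQ p hp).2.2⟩
    rw [le_div_iff₀ (by exact_mod_cast he)]
    calc (#Q : ℝ) * e ≤ ((⌊y⌋₊ / e * e : ℕ) : ℝ) := by exact_mod_cast Nat.mul_le_mul_right e this
      _ ≤ ⌊y⌋₊ := by exact_mod_cast Nat.div_mul_le_self _ _
      _ ≤ y := Nat.floor_le (by linarith)
  calc ∑ p ∈ Q, log p ≤ ∑ _p ∈ Q, log y :=
        sum_le_sum fun p hp => log_le_log (by exact_mod_cast (hQ p hp).1.pos) (hQ p hp).2.1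
    _ = #Q * log y := by rw [sum_const, nsmul_eq_mul]
    _ ≤ y / e * log y := mul_le_mul_of_nonneg_right hcard (log_nonneg hy)

lemma sum_log_le_sqrt_of_orderOf_eq {a e : ℕ} {y : ℝ} (ha : 1 < a) (hy : 1 ≤ y) (he : 0 < e)
    {Q : Finset ℕ} (hQ : ∀ p ∈ Q, p.Prime ∧ (p : ℝ) ≤ y ∧ orderOf (a : ZMod p) = e) :
    ∑ p ∈ Q, log p ≤ √(y * log y * log a) := by
  have hpow : ∀ p ∈ Q, (a : ZMod p) ^ e = 1 := fun p hp => (hQ p hp).2.2 ▸ pow_orderOf_eq_one _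
  have hdvd : ∀ p ∈ Q, e ∣ p - 1 := fun p hp => by
    have : Fact p.Prime := ⟨(hQ p hp).1⟩
    refine (hQ p hp).2.2 ▸ ZMod.orderOf_dvd_card_sub_one fun h0 => ?_
    simpa [h0, zero_pow he.ne'] using hpow p hp
  have hA := sum_log_le_mul_log_of_pow_eq_one ha he fun p hp => ⟨(hQ p hp).1, hpow p hp⟩
  have hB := sum_log_le_div_mul_log hy he fun p hp => ⟨(hQ p hp).1, (hQ p hp).2.1, hdvd p hp⟩
  have hS : 0 ≤ ∑ p ∈ Q, log p :=
    sum_nonneg fun p hp => log_nonneg (by exact_mod_cast (hQ p hp).1.one_lt.le)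
  have hly := log_nonneg hy
  have hla : 0 ≤ log (a : ℝ) := log_nonneg (by exact_mod_cast ha.le)
  rw [le_sqrt hS (by positivity)]
  calc (∑ p ∈ Q, log p) ^ 2 ≤ (e * log a) * (y / e * log y) := by
        rw [sq]; exact mul_le_mul hA hB hS (by positivity)
    _ = y * log y * log a := by field_simp

lemma log_smoothRadical_pow_sub_one_le {a n : ℕ} {y : ℝ} (ha : 1 < a) (hn : n ≠ 0) (hy : 1 ≤ y) :
    log (smoothRadical y (a ^ n - 1)) ≤ #n.divisors * √(y * log y * log a) := by
  set P := (a ^ n - 1).primeFactors.filter fun p : ℕ => (p : ℝ) ≤ y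
  have hP : ∀ p ∈ P, p.Prime ∧ (p : ℝ) ≤ y ∧ (a : ZMod p) ^ n = 1 := fun p hp => by
    obtain ⟨hpm, hpy⟩ := mem_filter.1 hp
    exact ⟨Nat.prime_of_mem_primeFactors hpm, hpy,
      (ZMod.natCast_pow_eq_one_iff_dvd (by omega)).2 (Nat.dvd_of_mem_primeFactors hpm)⟩
  have hmaps : ∀ p ∈ P, orderOf (a : ZMod p) ∈ n.divisors := fun p hp =>
    Nat.mem_divisors.2 ⟨orderOf_dvd_of_pow_eq_one (hP p hp).2.2, hn⟩
  rw [smoothRadical, Nat.cast_prod, log_prod fun p hp => by exact_mod_cast (hP p hp).1.ne_zero,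
    ← sum_fiberwise_of_maps_to hmaps, ← nsmul_eq_mul, ← sum_const]
  refine sum_le_sum fun e he => sum_log_le_sqrt_of_orderOf_eq ha hy
    (Nat.pos_of_mem_divisors he) fun p hp => ?_
  obtain ⟨hpP, hpe⟩ := mem_filter.1 hp
  exact ⟨(hP p hpP).1, (hP p hpP).2.1, hpe⟩

lemma sqrt_mul_log_le_rpow {y : ℝ} (hy : 0 ≤ y) : √(y * log y) ≤ √6 * y ^ (7 / 12 : ℝ) := by
  have hlog : y * log y ≤ 6 * y ^ (7 / 6 : ℝ) := by
    calc y * log y ≤ y * (y ^ (1 / 6 : ℝ) / (1 / 6)) :=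
          mul_le_mul_of_nonneg_left (log_le_rpow_div hy (by norm_num)) hy
      _ = 6 * (y ^ (1 : ℝ) * y ^ (1 / 6 : ℝ)) := by rw [rpow_one]; ring
      _ = 6 * y ^ (7 / 6 : ℝ) := by rw [← rpow_add' hy (by norm_num)]; norm_num
  calc √(y * log y) ≤ √(6 * y ^ (7 / 6 : ℝ)) := sqrt_le_sqrt hlog
    _ = √6 * y ^ (7 / 12 : ℝ) := by
      rw [sqrt_mul (by norm_num), sqrt_eq_rpow (y ^ _), ← rpow_mul hy]; norm_num

lemma isLittleO_natCast_rpow {r : ℝ} (hr : r < 1) :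
    (fun n : ℕ => (n : ℝ) ^ r) =o[atTop] (fun n : ℕ => (n : ℝ)) := by
  have hreal : (fun x : ℝ => x ^ r) =o[atTop] id := by
    refine (isLittleO_iff_tendsto' ?_).2 ?_
    · filter_upwards [eventually_gt_atTop 0] with x hx h using absurd h hx.ne'
    · refine (tendsto_rpow_neg_atTop (sub_pos.2 hr)).congr' ?_
      filter_upwards [eventually_gt_atTop 0] with x hx
      rw [id, ← rpow_sub_one hx.ne', neg_sub]
  exact hreal.comp_tendsto tendsto_natCast_atTop_atTop

lemma isLittleO_log_smoothRadical {a : ℕ} (ha : 1 < a) {K : ℝ} (hK : 1 ≤ K) :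
    (fun n : ℕ => log (smoothRadical (K * n) (a ^ n - 1))) =o[atTop] (fun n : ℕ => (n : ℝ)) := by
  refine IsBigO.trans_isLittleO ?_ (isLittleO_natCast_rpow (r := 11 / 12) (by norm_num))
  refine IsBigO.of_bound (256 * √6 * √(log a) * K ^ (7 / 12 : ℝ)) ?_
  filter_upwards [eventually_ge_atTop 1] with n hn
  have hn0 : (0 : ℝ) ≤ n := n.cast_nonneg
  have hy : 1 ≤ K * n := one_le_mul_of_one_le_of_one_le hK (by exact_mod_cast hn)
  have hla : 0 ≤ log (a : ℝ) := log_nonneg (by exact_mod_cast ha.le)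
  have hrad : (1 : ℝ) ≤ smoothRadical (K * n) (a ^ n - 1) := by
    exact_mod_cast prod_pos fun p hp => Nat.pos_of_mem_primeFactors (mem_filter.1 hp).1
  rw [norm_of_nonneg (log_nonneg hrad), norm_of_nonneg (by positivity)]
  calc log (smoothRadical (K * n) (a ^ n - 1))
      ≤ #n.divisors * √(K * n * log (K * n) * log a) :=
        log_smoothRadical_pow_sub_one_le ha (by omega) hy
    _ ≤ (256 * n ^ (1 / 3 : ℝ)) * (√6 * (K * n) ^ (7 / 12 : ℝ) * √(log a)) := by
        rw [sqrt_mul' _ hla]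
        gcongr
        · exact Nat.card_divisors_le_rpow n
        · exact sqrt_mul_log_le_rpow (by positivity)
    _ = 256 * √6 * √(log a) * K ^ (7 / 12 : ℝ) * (n ^ (1 / 3 : ℝ) * n ^ (7 / 12 : ℝ)) := by
        rw [mul_rpow (by positivity) hn0]; ring
    _ = 256 * √6 * √(log a) * K ^ (7 / 12 : ℝ) * n ^ (11 / 12 : ℝ) := by
        rw [← rpow_add' hn0 (by norm_num)]; norm_num

lemma log_smoothPart_add_log_prod_primeFactors_le (y : ℝ) {m : ℕ} (hm : m ≠ 0) :
    log (smoothPart y m) + log (∏ p ∈ m.primeFactors, p : ℕ) ≤ log m + log (smoothRadical y m) := by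
  have hpos : ∀ p ∈ m.primeFactors, 0 < p := fun p hp => Nat.pos_of_mem_primeFactors hp
  have hs : 0 < smoothPart y m := prod_pos fun p hp => pow_pos (hpos p hp) _
  have hR : 0 < ∏ p ∈ m.primeFactors, p := prod_pos hpos
  have hRy : 0 < smoothRadical y m := prod_pos fun p hp => hpos p (mem_filter.1 hp).1
  have hle := Nat.le_of_dvd (by positivity) (smoothPart_mul_prod_primeFactors_dvd y m)
  rw [← log_mul (by positivity) (by positivity), ← log_mul (by positivity) (by positivity)]
  exact log_le_log (by positivity) (by exact_mod_cast hle)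

lemma log_smoothPart_pow_sub_one_le (y : ℝ) {a n : ℕ} (ha : 1 < a) (hn : n ≠ 0) :
    log (smoothPart y (a ^ n - 1)) ≤ n * log a - log (∏ p ∈ (a ^ n - 1).primeFactors, p : ℕ) +
      log (smoothRadical y (a ^ n - 1)) := by
  have hm : a ^ n - 1 ≠ 0 := by have := Nat.one_lt_pow hn ha; omega
  have hlog : log ((a ^ n - 1 : ℕ) : ℝ) ≤ n * log a := by
    rw [← log_pow]
    exact log_le_log (by exact_mod_cast Nat.pos_of_ne_zero hm) (by exact_mod_cast Nat.sub_le _ _)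
  linarith [log_smoothPart_add_log_prod_primeFactors_le y hm]

lemma ABCConjecture.exists_succ_le_mul_prod_primeFactors_rpow (hABC : ABCConjecture) {ε : ℝ}
    (hε : 0 < ε) :
    ∃ Kε > 0, ∀ m : ℕ, m ≠ 0 → (m + 1 : ℝ) ≤
      Kε * ((∏ p ∈ m.primeFactors, p) * ∏ p ∈ (m + 1).primeFactors, p : ℕ) ^ (1 + ε) := by
  obtain ⟨Kε, hKε, h⟩ := hABC ε hε
  refine ⟨Kε, hKε, fun m hm => ?_⟩
  have hrad : intRadical (m * 1 * (m + 1)) =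
      (∏ p ∈ m.primeFactors, p) * ∏ p ∈ (m + 1).primeFactors, p := by
    have hcop : m.Coprime (m + 1) := Nat.coprime_self_add_right.2 (Nat.coprime_one_right m)
    rw [intRadical, mul_one, ← Nat.cast_succ, ← Nat.cast_mul, Int.natAbs_natCast,
      hcop.primeFactors_mul, prod_union hcop.disjoint_primeFactors]
  have := h m 1 (m + 1) (by exact_mod_cast hm) one_ne_zero (by positivity) isCoprime_one_right rfl
  rw [hrad] at this
  refine le_trans ?_ this
  push_cast
  exact le_max_of_le_right (le_max_of_le_right (le_abs_self _))

lemma ABCConjecture.exists_log_prod_primeFactors_pow_sub_one_ge (hABC : ABCConjecture) {a : ℕ}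
    (ha : 1 < a) {ε : ℝ} (hε : 0 < ε) :
    ∃ C, ∀ n : ℕ, n ≠ 0 →
      (1 - ε) * n * log a - C ≤ log (∏ p ∈ (a ^ n - 1).primeFactors, p : ℕ) := by
  obtain ⟨Kε, hKε, h⟩ := hABC.exists_succ_le_mul_prod_primeFactors_rpow hε
  refine ⟨|log Kε| + log a, fun n hn => ?_⟩
  have han : a ^ n - 1 + 1 = a ^ n := Nat.sub_add_cancel (Nat.one_le_pow _ _ (by omega))
  have hm : a ^ n - 1 ≠ 0 := by have := Nat.one_lt_pow hn ha; omega
  have hRa : ∏ p ∈ (a ^ n - 1 + 1).primeFactors, p ≤ a := by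
    rw [han, Nat.primeFactors_pow _ hn]
    exact Nat.le_of_dvd (by omega) (Nat.prod_primeFactors_dvd a)
  set R := ∏ p ∈ (a ^ n - 1).primeFactors, p
  have hR0 : (0 : ℝ) < R := by exact_mod_cast prod_pos fun p hp => Nat.pos_of_mem_primeFactors hp
  have ha0 : (0 : ℝ) < a := by positivity
  have hbound : (a : ℝ) ^ n ≤ Kε * (R * a) ^ (1 + ε) := by
    calc (a : ℝ) ^ n = (a ^ n - 1 : ℕ) + 1 := by exact_mod_cast han.symm
      _ ≤ Kε * ((R * ∏ p ∈ (a ^ n - 1 + 1).primeFactors, p : ℕ) : ℝ) ^ (1 + ε) := h _ hm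
      _ ≤ Kε * (R * a) ^ (1 + ε) := by rw [Nat.cast_mul]; gcongr
  have hlog : n * log a ≤ log Kε + (1 + ε) * (log R + log a) := by
    have := log_le_log (by positivity) hbound
    rwa [log_pow, log_mul hKε.ne' (by positivity), log_rpow (by positivity),
      log_mul hR0.ne' ha0.ne'] at this
  have hnL : 0 ≤ n * log a := mul_nonneg n.cast_nonneg (log_nonneg (by exact_mod_cast ha.le))
  -- `(1 - ε) (1 + ε) ≤ 1`
  have key : (1 + ε) * ((1 - ε) * n * log a - |log Kε|) ≤ (1 + ε) * (log R + log a) := by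
    nlinarith [le_abs_self (log Kε), mul_nonneg hε.le (abs_nonneg (log Kε)),
      mul_nonneg (sq_nonneg ε) hnL]
  linarith [le_of_mul_le_mul_left key (by linarith : (0 : ℝ) < 1 + ε)]

theorem abc_implies_smooth_set_finite
    (hABC : ABCConjecture)
    (a : ℕ) (ha : 1 < a) (c : ℝ) (hc : 1 < c) (K : ℝ) (hK : 1 ≤ K) :
    {n : ℕ | 1 ≤ n ∧
      (c : ℝ) ^ n < (smoothPart (K * (n : ℝ)) (a ^ n - 1) : ℝ)}.Finite := by
  have hL : 0 < log (a : ℝ) := log_pos (by exact_mod_cast ha)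
  have hc' : 0 < log c := log_pos hc
  obtain ⟨C, hC⟩ := hABC.exists_log_prod_primeFactors_pow_sub_one_ge ha
    (ε := log c / (2 * log a)) (by positivity)
  have hsmall : ∀ᶠ n : ℕ in atTop,
      C + log (smoothRadical (K * n) (a ^ n - 1)) ≤ log c / 4 * n := by
    have hconst : (fun _ : ℕ => C) =o[atTop] (fun n : ℕ => (n : ℝ)) :=
      isLittleO_const_left.2 <| Or.inr <| tendsto_norm_atTop_atTop.comp tendsto_natCast_atTop_atTop
    filter_upwards [(hconst.add (isLittleO_log_smoothRadical ha hK)).def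
      (show 0 < log c / 4 by positivity)] with n hn
    simpa using (le_abs_self _).trans hn
  have hfin : ∀ᶠ n : ℕ in atTop, ¬(1 ≤ n ∧ c ^ n < smoothPart (K * n) (a ^ n - 1)) := by
    filter_upwards [hsmall] with n hsmall_n ⟨hn, hcn⟩
    have hlow : n * log c < log (smoothPart (K * n) (a ^ n - 1)) := by
      rw [← log_pow]; exact log_lt_log (by positivity) hcn
    have hup := log_smoothPart_pow_sub_one_le (K * n) ha (by omega : n ≠ 0)
    have hrad := hC n (by omega)
    have hε : (1 - log c / (2 * log a)) * n * log a = n * log a - n * log c / 2 := by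
      field_simp
    have : (0 : ℝ) < n := by exact_mod_cast hn
    have : 0 < n * log c := by positivity
    linarith
  rw [← Nat.cofinite_eq_atTop, eventually_cofinite] at hfin
  simpa using hfin
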